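/- arXiv:2110.15653 — 2 statements merged into one kernel-verified Lean document; each statement's English description precedes it below -/
import Mathlib

section
/- Let Σ be an m×m real symmetric positive definite matrix, μ ∈ ℝ^m, Ω ≥ 0, and let E = { c ∈ ℝ^m : (c − μ)ᵀ Σ⁻¹ (c − μ) ≤ Ω² }. If x ∈ ℝ^m satisfies xᵀΣx > 0, then the vector c* = μ + Ω·(Σx)/√(xᵀΣx) belongs to E and attains the maximum of c ↦ cᵀx over E, i.e., (c*)ᵀx = μᵀx + Ω·√(xᵀΣx). -/
/-!
Write `q = xᵀ S x`. Since `c ⬝ᵥ x = (c - μ)ᵀ S⁻¹ (S x)`, the Cauchy–Schwarz inequality for the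
positive definite form `S⁻¹` gives `((c - μ) ⬝ᵥ x)² ≤ ((c - μ)ᵀ S⁻¹ (c - μ)) q ≤ Ω² q` on the
ellipsoid, so `c ⬝ᵥ x ≤ μ ⬝ᵥ x + Ω √q`. The point `c* = μ + (Ω / √q) S x` attains this bound,
and its `S⁻¹`-norm is `(Ω / √q)² q ≤ Ω²`. For `q = 0` the convention `Ω / 0 = 0` gives
`c* = μ`, and all three claims still hold.
-/

open Matrix

namespace Matrix

variable {n : Type*} [Fintype n] [DecidableEq n]

theorem PosSemidef.dotProduct_mulVec_sq_le {M : Matrix n n ℝ} (hM : M.PosSemidef) (u v : n → ℝ) :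
    (u ⬝ᵥ (M *ᵥ v)) ^ 2 ≤ (u ⬝ᵥ (M *ᵥ u)) * (v ⬝ᵥ (M *ᵥ v)) := by
  have hsymm : (toLinearMap₂' ℝ M).IsSymm := ⟨fun u v => by
    rw [RingHom.id_apply, toLinearMap₂'_apply', toLinearMap₂'_apply', dotProduct_mulVec,
      ← mulVec_transpose, (isHermitian_iff_isSymm.mp hM.isHermitian).eq, dotProduct_comm]⟩
  simpa only [toLinearMap₂'_apply'] using
    LinearMap.BilinForm.apply_sq_le_of_symm (toLinearMap₂' ℝ M)
      (fun w => by simpa only [toLinearMap₂'_apply', star_trivial] using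
        hM.dotProduct_mulVec_nonneg w) hsymm u v

theorem inv_mulVec_mulVec {R : Type*} [CommRing R] {S : Matrix n n R} (hS : IsUnit S.det)
    (x : n → R) : S⁻¹ *ᵥ (S *ᵥ x) = x := by
  rw [mulVec_mulVec, nonsing_inv_mul S hS, one_mulVec]

theorem PosDef.dotProduct_sq_le_inv_mul {S : Matrix n n ℝ} (hS : S.PosDef) (u x : n → ℝ) :
    (u ⬝ᵥ x) ^ 2 ≤ (u ⬝ᵥ (S⁻¹ *ᵥ u)) * (x ⬝ᵥ (S *ᵥ x)) := by
  simpa only [inv_mulVec_mulVec ((isUnit_iff_isUnit_det S).mp hS.isUnit),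
    dotProduct_comm (S *ᵥ x)] using hS.inv.posSemidef.dotProduct_mulVec_sq_le u (S *ᵥ x)

theorem PosDef.dotProduct_le_of_mem_ellipsoid {S : Matrix n n ℝ} (hS : S.PosDef)
    {μ c : n → ℝ} {Ω : ℝ} (hΩ : 0 ≤ Ω) (hc : (c - μ) ⬝ᵥ (S⁻¹ *ᵥ (c - μ)) ≤ Ω ^ 2)
    (x : n → ℝ) : c ⬝ᵥ x ≤ μ ⬝ᵥ x + Ω * √(x ⬝ᵥ (S *ᵥ x)) := by
  have hq : 0 ≤ x ⬝ᵥ (S *ᵥ x) := by simpa using hS.posSemidef.dotProduct_mulVec_nonneg x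
  have hsq : ((c - μ) ⬝ᵥ x) ^ 2 ≤ (Ω * √(x ⬝ᵥ (S *ᵥ x))) ^ 2 := calc
    _ ≤ _ := hS.dotProduct_sq_le_inv_mul (c - μ) x
    _ ≤ Ω ^ 2 * (x ⬝ᵥ (S *ᵥ x)) := mul_le_mul_of_nonneg_right hc hq
    _ = _ := by rw [mul_pow, Real.sq_sqrt hq]
  have := abs_le_of_sq_le_sq hsq (by positivity)
  rw [sub_dotProduct] at this
  linarith [le_abs_self (c ⬝ᵥ x - μ ⬝ᵥ x)]

end Matrix

theorem div_mul_sq_self {K : Type*} [Field K] (a b : K) : a / b * b ^ 2 = a * b := by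
  rw [sq, div_mul_eq_mul_div, mul_div_assoc, mul_self_div_self]

theorem div_sqrt_sq_mul_le (a : ℝ) {q : ℝ} (hq : 0 ≤ q) : (a / √q) ^ 2 * q ≤ a ^ 2 := by
  rcases hq.eq_or_lt with rfl | hq
  · simpa using sq_nonneg a
  · rw [div_pow, Real.sq_sqrt hq.le, div_mul_cancel₀ _ hq.ne']

theorem ellipsoid_argmax_linear_general {m : ℕ} (S : Matrix (Fin m) (Fin m) ℝ) (hS : S.PosDef)
    (μ : Fin m → ℝ) (Ω : ℝ) (hΩ : 0 ≤ Ω) (x : Fin m → ℝ) :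
    let cstar : Fin m → ℝ := μ + (Ω / Real.sqrt (x ⬝ᵥ (S *ᵥ x))) • (S *ᵥ x)
    (cstar - μ) ⬝ᵥ (S⁻¹ *ᵥ (cstar - μ)) ≤ Ω ^ 2 ∧
    (∀ c : Fin m → ℝ, (c - μ) ⬝ᵥ (S⁻¹ *ᵥ (c - μ)) ≤ Ω ^ 2 → c ⬝ᵥ x ≤ cstar ⬝ᵥ x) ∧
    cstar ⬝ᵥ x = μ ⬝ᵥ x + Ω * Real.sqrt (x ⬝ᵥ (S *ᵥ x)) := by
  intro cstar
  set q := x ⬝ᵥ (S *ᵥ x)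
  have hq : 0 ≤ q := by simpa using hS.posSemidef.dotProduct_mulVec_nonneg x
  have hdisp : cstar - μ = (Ω / √q) • (S *ᵥ x) := add_sub_cancel_left _ _
  have hval : cstar ⬝ᵥ x = μ ⬝ᵥ x + Ω * √q := by
    rw [add_dotProduct, smul_dotProduct, smul_eq_mul, dotProduct_comm (S *ᵥ x) x,
      ← div_mul_sq_self Ω √q, Real.sq_sqrt hq]
  refine ⟨?_, fun c hc => hval ▸ hS.dotProduct_le_of_mem_ellipsoid hΩ hc x, hval⟩
  rw [hdisp, mulVec_smul, inv_mulVec_mulVec ((isUnit_iff_isUnit_det S).mp hS.isUnit),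
    dotProduct_smul, smul_dotProduct, dotProduct_comm (S *ᵥ x) x, smul_eq_mul, smul_eq_mul,
    ← mul_assoc, ← sq]
  exact div_sqrt_sq_mul_le Ω hq

/-- If `xᵀ S x > 0`, the vector `c* = μ + Ω (S x)/√(xᵀ S x)` lies in the ellipsoid
`E = {c | (c-μ)ᵀ S⁻¹ (c-μ) ≤ Ω²}` and maximizes `c ↦ c ⬝ᵥ x` over `E`, achieving the value
`μ ⬝ᵥ x + Ω √(xᵀ S x)`. -/
theorem ellipsoid_argmax_linear {m : ℕ} (S : Matrix (Fin m) (Fin m) ℝ) (hS : S.PosDef)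
    (μ : Fin m → ℝ) (Ω : ℝ) (hΩ : 0 ≤ Ω) (x : Fin m → ℝ)
    (hx : 0 < x ⬝ᵥ (S *ᵥ x)) :
    let cstar : Fin m → ℝ := μ + (Ω / Real.sqrt (x ⬝ᵥ (S *ᵥ x))) • (S *ᵥ x)
    (cstar - μ) ⬝ᵥ (S⁻¹ *ᵥ (cstar - μ)) ≤ Ω ^ 2 ∧
    (∀ c : Fin m → ℝ, (c - μ) ⬝ᵥ (S⁻¹ *ᵥ (c - μ)) ≤ Ω ^ 2 → c ⬝ᵥ x ≤ cstar ⬝ᵥ x) ∧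
    cstar ⬝ᵥ x = μ ⬝ᵥ x + Ω * Real.sqrt (x ⬝ᵥ (S *ᵥ x)) :=
  ellipsoid_argmax_linear_general S hS μ Ω hΩ x
end

section
/- Let Σ be an m×m real symmetric positive definite matrix, μ ∈ ℝ^m, Ω ≥ 0, let E = { c ∈ ℝ^m : (c − μ)ᵀ Σ⁻¹ (c − μ) ≤ Ω² }, and let X be a nonempty finite subset of ℝ^m. Then the min-max robust problem reduces to a smooth problem: min over x ∈ X of (sup over c ∈ E of cᵀx) equals min over x ∈ X of (μᵀx + Ω·√(xᵀΣx)). -/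
/-!
Fix `x` and write `t = xᵀ S x`. By Cauchy–Schwarz for the inner product induced by `S⁻¹`,
`((c - μ)ᵀ x)² ≤ ((c - μ)ᵀ S⁻¹ (c - μ)) · ((S x)ᵀ S⁻¹ (S x)) ≤ Ω² t` for every `c ∈ E`, so
`cᵀ x ≤ μᵀ x + Ω √t`, and the point `c = μ + (Ω / √t) S x` of `E` attains this bound.
Hence the inner supremum is `μᵀ x + Ω √t` for each `x`, and the two minima over `X` agree termwise.
-/

open Matrix

variable {n : Type*} [Fintype n]

theorem Matrix.PosSemidef.dotProduct_mulVec_sq_le_s2 {A : Matrix n n ℝ} (hA : A.PosSemidef)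
    (u v : n → ℝ) : (u ⬝ᵥ (A *ᵥ v)) ^ 2 ≤ (u ⬝ᵥ (A *ᵥ u)) * (v ⬝ᵥ (A *ᵥ v)) := by
  let := A.toSeminormedAddCommGroup hA
  let := A.toInnerProductSpace hA
  -- in the inner product induced by `A`, `⟪u, v⟫ = (A *ᵥ v) ⬝ᵥ u`
  have h : ((A *ᵥ v) ⬝ᵥ u) * ((A *ᵥ v) ⬝ᵥ u) ≤ ((A *ᵥ u) ⬝ᵥ u) * ((A *ᵥ v) ⬝ᵥ v) :=
    real_inner_mul_inner_self_le u v
  simpa only [sq, dotProduct_comm _ u, dotProduct_comm _ v] using h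

variable [DecidableEq n]

def ellipsoid (S : Matrix n n ℝ) (μ : n → ℝ) (Ω : ℝ) : Set (n → ℝ) :=
  {c | (c - μ) ⬝ᵥ (S⁻¹ *ᵥ (c - μ)) ≤ Ω ^ 2}

variable {S : Matrix n n ℝ} {μ : n → ℝ} {Ω : ℝ}

theorem Matrix.PosDef.dotProduct_sq_le (hS : S.PosDef) (d x : n → ℝ) :
    (d ⬝ᵥ x) ^ 2 ≤ (d ⬝ᵥ (S⁻¹ *ᵥ d)) * (x ⬝ᵥ (S *ᵥ x)) := by
  have h := hS.inv.posSemidef.dotProduct_mulVec_sq_le_s2 d (S *ᵥ x)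
  rwa [mulVec_mulVec, nonsing_inv_mul S hS.det_pos.ne'.isUnit, one_mulVec,
    dotProduct_comm (S *ᵥ x)] at h

theorem dotProduct_le_of_mem_ellipsoid (hS : S.PosDef) (hΩ : 0 ≤ Ω) {c : n → ℝ}
    (hc : c ∈ ellipsoid S μ Ω) (x : n → ℝ) :
    c ⬝ᵥ x ≤ μ ⬝ᵥ x + Ω * √(x ⬝ᵥ (S *ᵥ x)) := by
  have ht : 0 ≤ x ⬝ᵥ (S *ᵥ x) := by simpa using hS.posSemidef.dotProduct_mulVec_nonneg x
  have hsq : ((c - μ) ⬝ᵥ x) ^ 2 ≤ Ω ^ 2 * (x ⬝ᵥ (S *ᵥ x)) :=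
    (hS.dotProduct_sq_le (c - μ) x).trans (mul_le_mul_of_nonneg_right hc ht)
  have h := Real.le_sqrt_of_sq_le hsq
  rw [Real.sqrt_mul' _ ht, Real.sqrt_sq hΩ, sub_dotProduct] at h
  linarith

/-- When `xᵀ S x = 0`, the witness degenerates to `μ` through `Ω / 0 = 0`. -/
theorem exists_mem_ellipsoid_dotProduct_eq (hS : IsUnit S.det) (μ : n → ℝ) (Ω : ℝ)
    (x : n → ℝ) : ∃ c ∈ ellipsoid S μ Ω, c ⬝ᵥ x = μ ⬝ᵥ x + Ω * √(x ⬝ᵥ (S *ᵥ x)) := by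
  set t := x ⬝ᵥ (S *ᵥ x)
  have hSx : (S *ᵥ x) ⬝ᵥ x = t := dotProduct_comm _ _
  have hscale : Ω / √t * t = Ω * √t := by
    rw [div_mul_eq_mul_div, mul_div_assoc, Real.div_sqrt]
  refine ⟨μ + (Ω / √t) • (S *ᵥ x), ?_, ?_⟩
  · change (μ + _ - μ) ⬝ᵥ _ ≤ _
    rw [add_sub_cancel_left, mulVec_smul, mulVec_mulVec, nonsing_inv_mul S hS, one_mulVec,
      smul_dotProduct, dotProduct_smul, smul_eq_mul, smul_eq_mul, hSx, hscale]
    calc Ω / √t * (Ω * √t) = Ω ^ 2 * (√t / √t) := by ring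
      _ ≤ Ω ^ 2 := mul_le_of_le_one_right (sq_nonneg Ω) (div_self_le_one _)
  · rw [add_dotProduct, smul_dotProduct, smul_eq_mul, hSx, hscale]

theorem isGreatest_image_dotProduct_ellipsoid (hS : S.PosDef) (hΩ : 0 ≤ Ω) (x : n → ℝ) :
    IsGreatest ((· ⬝ᵥ x) '' ellipsoid S μ Ω) (μ ⬝ᵥ x + Ω * √(x ⬝ᵥ (S *ᵥ x))) := by
  obtain ⟨c, hc, hcx⟩ := exists_mem_ellipsoid_dotProduct_eq hS.det_pos.ne'.isUnit μ Ω x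
  refine ⟨⟨c, hc, hcx⟩, ?_⟩
  rintro _ ⟨c', hc', rfl⟩
  exact dotProduct_le_of_mem_ellipsoid hS hΩ hc' x

/-- Min-max robust problem over a nonempty finite feasible set `X` with ellipsoidal
uncertainty set reduces to the smooth problem `min_{x∈X} μᵀx + Ω √(xᵀ S x)`. -/
theorem robust_minmax_reduction {m : ℕ} (S : Matrix (Fin m) (Fin m) ℝ) (hS : S.PosDef)
    (μ : Fin m → ℝ) (Ω : ℝ) (hΩ : 0 ≤ Ω)
    (X : Finset (Fin m → ℝ)) (hX : X.Nonempty) :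
    X.inf' hX (fun x => sSup ((fun c => c ⬝ᵥ x) ''
        {c : Fin m → ℝ | (c - μ) ⬝ᵥ (S⁻¹ *ᵥ (c - μ)) ≤ Ω ^ 2}))
      = X.inf' hX (fun x => μ ⬝ᵥ x + Ω * Real.sqrt (x ⬝ᵥ (S *ᵥ x))) :=
  Finset.inf'_congr hX rfl fun x _ => (isGreatest_image_dotProduct_ellipsoid hS hΩ x).csSup_eq
end
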